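/- arXiv:1501.02048 — 2 statements merged into one kernel-verified Lean document; each statement's English description precedes it below -/
import Mathlib

section
/- Let $f:[0,\infty)\to[0,1]$ be measurable with $\int_0^\infty f(r)r^{n-1}dr = \int_0^{r_n} r^{n-1}dr$, and let $\phi:[0,\infty)\to[0,\infty)$ be strictly increasing. If $\int_0^\infty \phi(r)f(r)r^{n-1}dr = \int_0^{r_n}\phi(r)r^{n-1}dr$ (both finite), then $f = \mathbf{1}_{[0,r_n]}$ almost everywhere. -/
/-!
With the weight `w r = r ^ (n - 1)`, the function `(φ rₙ - φ r) (𝟙_{(0,rₙ]} r - f r) w r` is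
pointwise nonnegative, since `0 ≤ f ≤ 1` and `φ` increases, and its integral is
`φ rₙ · 0 - 0` by the mass and moment equalities. So it vanishes a.e.; as `φ r ≠ φ rₙ` for
`r ≠ rₙ` and `w > 0` on `(0, ∞)`, `f` is the indicator a.e.
-/

open MeasureTheory Set

lemma sub_mul_indicator_one_sub_nonneg {α : Type*} {s : Set α} {φ f : α → ℝ} {c : ℝ} {x : α}
    (hle : x ∈ s → φ x ≤ c) (hge : x ∉ s → c ≤ φ x) (hf0 : 0 ≤ f x) (hf1 : f x ≤ 1) :
    0 ≤ (c - φ x) * (s.indicator 1 x - f x) := by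
  by_cases hx : x ∈ s
  · simp only [indicator_of_mem hx, Pi.one_apply]
    exact mul_nonneg (sub_nonneg.2 (hle hx)) (sub_nonneg.2 hf1)
  · simp only [indicator_of_notMem hx]
    exact mul_nonneg_of_nonpos_of_nonpos (sub_nonpos.2 (hge hx)) (by linarith)

section
variable {α : Type*} [MeasurableSpace α] {μ : Measure α}

lemma integrable_of_lintegral_ofReal_ne_top {g : α → ℝ} (hg0 : 0 ≤ᵐ[μ] g)
    (hgm : AEStronglyMeasurable g μ) (hfin : ∫⁻ x, ENNReal.ofReal (g x) ∂μ ≠ ⊤) :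
    Integrable g μ :=
  ⟨hgm, (hasFiniteIntegral_iff_ofReal hg0).2 hfin.lt_top⟩

lemma integral_eq_of_lintegral_ofReal_eq {g h : α → ℝ} (hg0 : 0 ≤ᵐ[μ] g) (hh0 : 0 ≤ᵐ[μ] h)
    (hgm : AEStronglyMeasurable g μ) (hhm : AEStronglyMeasurable h μ)
    (heq : ∫⁻ x, ENNReal.ofReal (g x) ∂μ = ∫⁻ x, ENNReal.ofReal (h x) ∂μ) :
    ∫ x, g x ∂μ = ∫ x, h x ∂μ := by
  rw [integral_eq_lintegral_of_nonneg_ae hg0 hgm, integral_eq_lintegral_of_nonneg_ae hh0 hhm,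
    heq]

lemma setLIntegral_ofReal_eq_lintegral_indicator_mul {s : Set α} (hs : MeasurableSet s)
    (g : α → ℝ) :
    ∫⁻ x in s, ENNReal.ofReal (g x) ∂μ = ∫⁻ x, ENNReal.ofReal (s.indicator 1 x * g x) ∂μ := by
  have hind : ∀ x, ENNReal.ofReal (s.indicator 1 x * g x)
      = s.indicator (fun x => ENNReal.ofReal (g x)) x := by
    intro x
    by_cases hx : x ∈ s <;> simp [hx]
  simp_rw [hind]
  rw [lintegral_indicator hs]

lemma ae_mul_sub_eq_zero_of_integral_eq {u v φ : α → ℝ} (c : ℝ) (hu : Integrable u μ)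
    (hv : Integrable v μ) (hφu : Integrable (fun x => φ x * u x) μ)
    (hφv : Integrable (fun x => φ x * v x) μ) (hmass : ∫ x, u x ∂μ = ∫ x, v x ∂μ)
    (hmoment : ∫ x, φ x * u x ∂μ = ∫ x, φ x * v x ∂μ)
    (hsign : ∀ᵐ x ∂μ, 0 ≤ (c - φ x) * (v x - u x)) :
    ∀ᵐ x ∂μ, (c - φ x) * (v x - u x) = 0 := by
  have hsplit : (fun x => (c - φ x) * (v x - u x))
      = fun x => c * (v x - u x) - (φ x * v x - φ x * u x) := by
    funext x; ring
  have hint : Integrable (fun x => (c - φ x) * (v x - u x)) μ := by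
    rw [hsplit]; exact ((hv.sub hu).const_mul c).sub (hφv.sub hφu)
  have hzero : ∫ x, (c - φ x) * (v x - u x) ∂μ = 0 := by
    rw [hsplit, integral_sub (f := fun x => c * (v x - u x))
      (g := fun x => φ x * v x - φ x * u x) ((hv.sub hu).const_mul c) (hφv.sub hφu),
      integral_const_mul,
      integral_sub hv hu, integral_sub hφv hφu, hmass, hmoment]
    simp
  exact (integral_eq_zero_iff_of_nonneg_ae hsign hint).1 hzero

lemma ae_mul_sub_eq_zero_of_lintegral_eq {u v φ : α → ℝ} (c : ℝ)
    (hu0 : 0 ≤ᵐ[μ] u) (hv0 : 0 ≤ᵐ[μ] v) (hφ0 : 0 ≤ᵐ[μ] φ)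
    (hum : AEStronglyMeasurable u μ) (hvm : AEStronglyMeasurable v μ)
    (hφm : AEStronglyMeasurable φ μ)
    (hmass : ∫⁻ x, ENNReal.ofReal (u x) ∂μ = ∫⁻ x, ENNReal.ofReal (v x) ∂μ)
    (hmass_fin : ∫⁻ x, ENNReal.ofReal (v x) ∂μ ≠ ⊤)
    (hmoment : ∫⁻ x, ENNReal.ofReal (φ x * u x) ∂μ = ∫⁻ x, ENNReal.ofReal (φ x * v x) ∂μ)
    (hmoment_fin : ∫⁻ x, ENNReal.ofReal (φ x * u x) ∂μ ≠ ⊤)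
    (hsign : ∀ᵐ x ∂μ, 0 ≤ (c - φ x) * (v x - u x)) :
    ∀ᵐ x ∂μ, (c - φ x) * (v x - u x) = 0 := by
  have hφu0 : 0 ≤ᵐ[μ] fun x => φ x * u x := by
    filter_upwards [hφ0, hu0] with x hφx hux using mul_nonneg hφx hux
  have hφv0 : 0 ≤ᵐ[μ] fun x => φ x * v x := by
    filter_upwards [hφ0, hv0] with x hφx hvx using mul_nonneg hφx hvx
  exact ae_mul_sub_eq_zero_of_integral_eq c
    (integrable_of_lintegral_ofReal_ne_top hu0 hum (hmass ▸ hmass_fin))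
    (integrable_of_lintegral_ofReal_ne_top hv0 hvm hmass_fin)
    (integrable_of_lintegral_ofReal_ne_top hφu0 (hφm.mul hum) hmoment_fin)
    (integrable_of_lintegral_ofReal_ne_top hφv0 (hφm.mul hvm) (hmoment ▸ hmoment_fin))
    (integral_eq_of_lintegral_ofReal_eq hu0 hv0 hum hvm hmass)
    (integral_eq_of_lintegral_ofReal_eq hφu0 hφv0 (hφm.mul hum) (hφm.mul hvm) hmoment)
    hsign

theorem ae_eq_indicator_of_bathtub_eq {s : Set α} (hs : MeasurableSet s) {f w φ : α → ℝ} {c : ℝ}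
    (hf : AEStronglyMeasurable f μ) (hw : AEStronglyMeasurable w μ)
    (hφ : AEStronglyMeasurable φ μ) (hf01 : ∀ᵐ x ∂μ, 0 ≤ f x ∧ f x ≤ 1) (hw0 : 0 ≤ᵐ[μ] w)
    (hφ0 : 0 ≤ᵐ[μ] φ) (hle : ∀ᵐ x ∂μ, x ∈ s → φ x ≤ c) (hge : ∀ᵐ x ∂μ, x ∉ s → c ≤ φ x)
    (hmass : ∫⁻ x, ENNReal.ofReal (f x * w x) ∂μ = ∫⁻ x in s, ENNReal.ofReal (w x) ∂μ)
    (hmass_fin : ∫⁻ x in s, ENNReal.ofReal (w x) ∂μ ≠ ⊤)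
    (hmoment : ∫⁻ x, ENNReal.ofReal (φ x * f x * w x) ∂μ
      = ∫⁻ x in s, ENNReal.ofReal (φ x * w x) ∂μ)
    (hmoment_fin : ∫⁻ x, ENNReal.ofReal (φ x * f x * w x) ∂μ ≠ ⊤) :
    ∀ᵐ x ∂μ, φ x ≠ c → w x ≠ 0 → f x = s.indicator 1 x := by
  rw [setLIntegral_ofReal_eq_lintegral_indicator_mul hs] at hmass hmass_fin hmoment
  simp only [mul_assoc, mul_left_comm (s.indicator 1 _) (φ _)] at hmoment hmoment_fin
  have key := ae_mul_sub_eq_zero_of_lintegral_eq c (u := fun x => f x * w x)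
    (v := fun x => s.indicator 1 x * w x)
    (by filter_upwards [hf01, hw0] with x hfx hwx using mul_nonneg hfx.1 hwx)
    (by filter_upwards [hw0] with x hwx using
      mul_nonneg (indicator_nonneg (fun _ _ => zero_le_one) x) hwx)
    hφ0 (hf.mul hw) ((aestronglyMeasurable_one.indicator hs).mul hw) hφ
    hmass hmass_fin hmoment hmoment_fin (by
      filter_upwards [hf01, hw0, hle, hge] with x hfx hwx hlex hgex
      rw [← sub_mul, ← mul_assoc]
      exact mul_nonneg (sub_mul_indicator_one_sub_nonneg hlex hgex hfx.1 hfx.2) hwx)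
  filter_upwards [key] with x hx hφx hwx
  rw [← sub_mul, ← mul_assoc] at hx
  have hdiff : s.indicator 1 x - f x = 0 := (mul_eq_zero.1
    ((mul_eq_zero.1 hx).resolve_right hwx)).resolve_left (sub_ne_zero.2 hφx.symm)
  linarith

end

theorem bathtub_principle_equality_general (n : ℕ) (f : ℝ → ℝ) (hf : Measurable f)
    (hf01 : ∀ r, 0 ≤ f r ∧ f r ≤ 1) (rn : ℝ) (hrn : 0 < rn)
    (hmass : ∫⁻ r in Ioi (0:ℝ), ENNReal.ofReal (f r * r ^ (n - 1))
      = ∫⁻ r in Ioc (0:ℝ) rn, ENNReal.ofReal (r ^ (n - 1)))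
    (φ : ℝ → ℝ) (hφmono : StrictMonoOn φ (Ici (0:ℝ))) (hφ0 : ∀ r, 0 ≤ φ r)
    (hfin : ∫⁻ r in Ioi (0:ℝ), ENNReal.ofReal (φ r * f r * r ^ (n - 1)) ≠ ⊤)
    (heq : ∫⁻ r in Ioi (0:ℝ), ENNReal.ofReal (φ r * f r * r ^ (n - 1))
      = ∫⁻ r in Ioc (0:ℝ) rn, ENNReal.ofReal (φ r * r ^ (n - 1))) :
    ∀ᵐ r ∂(volume.restrict (Ioi (0:ℝ))), f r = Set.indicator (Icc (0:ℝ) rn) (fun _ => 1) r := by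
  set μ := volume.restrict (Ioi (0:ℝ))
  have hpos : ∀ᵐ r ∂μ, 0 < r := ae_restrict_mem measurableSet_Ioi
  have hμs : μ.restrict (Ioc 0 rn) = volume.restrict (Ioc 0 rn) := by
    rw [Measure.restrict_restrict measurableSet_Ioc, inter_eq_left.2 Ioc_subset_Ioi_self]
  have hφm : AEStronglyMeasurable φ μ := (aemeasurable_restrict_of_monotoneOn measurableSet_Ioi
    (hφmono.monotoneOn.mono Ioi_subset_Ici_self)).aestronglyMeasurable
  have hbathtub := ae_eq_indicator_of_bathtub_eq measurableSet_Ioc (c := φ rn)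
    (w := fun r => r ^ (n - 1))
    hf.aestronglyMeasurable (continuous_pow _).aestronglyMeasurable hφm
    (.of_forall hf01) (by filter_upwards [hpos] with r hr using pow_nonneg hr.le _)
    (.of_forall hφ0)
    (by filter_upwards [hpos] with r hr hrs using hφmono.monotoneOn hr.le hrn.le hrs.2)
    (by filter_upwards [hpos] with r hr hrs using
      (hφmono hrn.le hr.le (lt_of_not_ge fun h => hrs ⟨hr, h⟩)).le)
    (by rwa [hμs]) (by rw [hμs]; exact (continuous_pow _).integrableOn_Ioc.lintegral_lt_top.ne)
    (by rwa [hμs]) hfin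
  filter_upwards [hbathtub, hpos, Measure.ae_ne μ rn] with r hr hr0 hrne
  rw [hr (fun h => hrne (hφmono.injOn hr0.le hrn.le h)) (pow_pos hr0 _).ne']
  by_cases h : r ≤ rn <;> simp [indicator, hr0, hr0.le, h]

/-- Equality case of the bathtub principle: if `φ` is strictly increasing and
`∫₀^∞ φ(r) f(r) r^(n-1) dr = ∫₀^{rₙ} φ(r) r^(n-1) dr` (both finite), then
`f = 𝟙_{[0,rₙ]}` almost everywhere on `(0,∞)`. -/
theorem bathtub_principle_equality (n : ℕ) (hn : 0 < n) (f : ℝ → ℝ) (hf : Measurable f)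
    (hf01 : ∀ r, 0 ≤ f r ∧ f r ≤ 1) (rn : ℝ) (hrn : 0 < rn)
    (hmass : ∫⁻ r in Ioi (0:ℝ), ENNReal.ofReal (f r * r ^ (n - 1))
      = ∫⁻ r in Ioc (0:ℝ) rn, ENNReal.ofReal (r ^ (n - 1)))
    (φ : ℝ → ℝ) (hφmono : StrictMonoOn φ (Ici (0:ℝ))) (hφ0 : ∀ r, 0 ≤ φ r)
    (hfin : ∫⁻ r in Ioi (0:ℝ), ENNReal.ofReal (φ r * f r * r ^ (n - 1)) ≠ ⊤)
    (heq : ∫⁻ r in Ioi (0:ℝ), ENNReal.ofReal (φ r * f r * r ^ (n - 1))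
      = ∫⁻ r in Ioc (0:ℝ) rn, ENNReal.ofReal (φ r * r ^ (n - 1))) :
    ∀ᵐ r ∂(volume.restrict (Ioi (0:ℝ))), f r = Set.indicator (Icc (0:ℝ) rn) (fun _ => 1) r :=
  bathtub_principle_equality_general n f hf hf01 rn hrn hmass φ hφmono hφ0 hfin heq
end

section
/- Let $E_0, E_1$ be $k$-dimensional subspaces of $\mathbb{R}^n$ with $\|P_{E_0}-P_{E_1}\|_{op} \le \varepsilon$, let $D = \mathrm{diag}(\sigma^2,\dots,\sigma^2,1,\dots,1)$ ($\sigma^2$ in the first $k$ coordinates, $E_0$ the span of the first $k$ coordinate vectors), and let $g$ be a standard Gaussian vector in $\mathbb{R}^n$. Then the covariance matrix $A$ of $P_{E_1}D^{1/2}g$ (as a Gaussian vector in $E_1$) satisfies $(\det A)^{1/k} \le \sigma^2 + \varepsilon^2$, and hence the density $h$ of $P_{E_1}D^{1/2}g$ satisfies $\|h\|_\infty^{1/k} \ge (2\pi(\sigma^2+\varepsilon^2))^{-1/2}$. -/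
/-! The compression `A` of `D` to `E₁` is symmetric, so `det A` is the product of its
eigenvalues, each a value `⟪D x, x⟫` at a unit vector `x ∈ E₁`. This value is at least `σ²` since
`D ≥ σ²`, and at most `σ² + ε²`: the coordinates of `x` beyond the first `k` are those of
`x - P_{E₀} x = (P_{E₁} - P_{E₀}) x`, which has norm at most `ε`. Hence
`σ^{2k} ≤ det A ≤ (σ² + ε²)^k`, and the density bound follows since `t ↦ t^{-1/2}` is antitone. -/

open Set Real

open scoped InnerProductSpace

section Spectral

variable {E : Type*} [NormedAddCommGroup E] [InnerProductSpace ℝ E] [FiniteDimensional ℝ E]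
  {T : E →ₗ[ℝ] E} {n : ℕ} {m M : ℝ}

namespace LinearMap.IsSymmetric

theorem eigenvalues_mem_Icc (hT : T.IsSymmetric) (hn : Module.finrank ℝ E = n)
    (hlower : ∀ x, m * ‖x‖ ^ 2 ≤ ⟪T x, x⟫_ℝ) (hupper : ∀ x, ⟪T x, x⟫_ℝ ≤ M * ‖x‖ ^ 2)
    (i : Fin n) : hT.eigenvalues hn i ∈ Icc m M := by
  set b := hT.eigenvectorBasis hn
  have hb : ‖b i‖ = 1 := b.orthonormal.1 i
  have hμ : ⟪T (b i), b i⟫_ℝ = hT.eigenvalues hn i := by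
    simp [b, hT.apply_eigenvectorBasis, real_inner_smul_left]
  exact ⟨by simpa [hb, hμ] using hlower (b i), by simpa [hb, hμ] using hupper (b i)⟩

theorem det_mem_Icc_pow (hT : T.IsSymmetric) (hn : Module.finrank ℝ E = n) (hm : 0 ≤ m)
    (hlower : ∀ x, m * ‖x‖ ^ 2 ≤ ⟪T x, x⟫_ℝ) (hupper : ∀ x, ⟪T x, x⟫_ℝ ≤ M * ‖x‖ ^ 2) :
    T.det ∈ Icc (m ^ n) (M ^ n) := by
  have hμ := hT.eigenvalues_mem_Icc hn hlower hupper
  rw [hT.det_eq_prod_eigenvalues hn]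
  simp only [RCLike.ofReal_real_eq_id, id_eq]
  constructor
  · simpa using Finset.prod_le_prod (s := Finset.univ) (fun _ _ => hm) fun i _ => (hμ i).1
  · simpa using Finset.prod_le_prod (s := Finset.univ) (fun i _ => hm.trans (hμ i).1)
      fun i _ => (hμ i).2

end LinearMap.IsSymmetric

end Spectral

section Compression

variable {𝕜 E : Type*} [RCLike 𝕜] [NormedAddCommGroup E] [InnerProductSpace 𝕜 E]
  (K : Submodule 𝕜 E) [K.HasOrthogonalProjection]

noncomputable def Submodule.compression (T : E →ₗ[𝕜] E) : K →ₗ[𝕜] K :=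
  K.orthogonalProjectionOnto.toLinearMap ∘ₗ T ∘ₗ K.subtype

theorem Submodule.inner_compression_apply (T : E →ₗ[𝕜] E) (v w : K) :
    inner 𝕜 (K.compression T v) w = inner 𝕜 (T v) (w : E) := by
  simp [Submodule.compression]

theorem LinearMap.IsSymmetric.compression {T : E →ₗ[𝕜] E} (hT : T.IsSymmetric) :
    (K.compression T).IsSymmetric := fun v w => by
  rw [K.inner_compression_apply, ← inner_conj_symm v, K.inner_compression_apply,
    inner_conj_symm, hT]

end Compression

theorem EuclideanSpace.apply_eq_zero_of_mem_span_single {𝕜 ι κ : Type*} [RCLike 𝕜]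
    [DecidableEq ι] {f : κ → ι} {p : EuclideanSpace 𝕜 ι}
    (hp : p ∈ Submodule.span 𝕜 (range fun j => EuclideanSpace.single (f j) (1 : 𝕜)))
    {i : ι} (hi : i ∉ range f) : p i = 0 := by
  have hspan : Submodule.span 𝕜 (range fun j => EuclideanSpace.single (f j) (1 : 𝕜))
      ≤ LinearMap.ker (EuclideanSpace.projₗ i) :=
    Submodule.span_le.2 <| range_subset_iff.2 fun j => by
      simpa using fun h => hi ⟨j, h.symm⟩
  exact hspan hp

section Coordinates

variable {ι : Type*} [Fintype ι]

theorem Matrix.inner_toEuclideanLin_diagonal_self [DecidableEq ι] (d : ι → ℝ)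
    (x : EuclideanSpace ℝ ι) :
    ⟪Matrix.toEuclideanLin (Matrix.diagonal d) x, x⟫_ℝ = ∑ i, d i * x i ^ 2 := by
  simp [PiLp.inner_apply, Matrix.mulVec_diagonal, sq, mul_left_comm]

theorem EuclideanSpace.mul_norm_sq_le_sum_mul_sq {d : ι → ℝ} {m : ℝ} (hd : ∀ i, m ≤ d i)
    (x : EuclideanSpace ℝ ι) : m * ‖x‖ ^ 2 ≤ ∑ i, d i * x i ^ 2 := by
  rw [EuclideanSpace.real_norm_sq_eq, Finset.mul_sum]
  gcongr with i
  exact hd i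

theorem EuclideanSpace.sum_mul_sq_le_mul_norm_sq_add_norm_sub_sq {P : ι → Prop} [DecidablePred P]
    {d : ι → ℝ} {c : ℝ} (hc : 0 ≤ c) (hd : ∀ i, d i = if P i then c else 1)
    (x : EuclideanSpace ℝ ι) {p : EuclideanSpace ℝ ι} (hp : ∀ i, ¬P i → p i = 0) :
    ∑ i, d i * x i ^ 2 ≤ c * ‖x‖ ^ 2 + ‖x - p‖ ^ 2 := by
  rw [EuclideanSpace.real_norm_sq_eq, EuclideanSpace.real_norm_sq_eq, Finset.mul_sum,
    ← Finset.sum_add_distrib]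
  gcongr with i
  rw [hd i]
  split_ifs with h
  · nlinarith [sq_nonneg ((x - p) i)]
  · simp [hp i h]
    nlinarith [sq_nonneg (x i)]

end Coordinates

theorem Submodule.norm_sub_starProjection_le {𝕜 E : Type*} [RCLike 𝕜] [NormedAddCommGroup E]
    [InnerProductSpace 𝕜 E] {K L : Submodule 𝕜 E} [K.HasOrthogonalProjection]
    [L.HasOrthogonalProjection] {ε : ℝ} (h : ‖K.starProjection - L.starProjection‖ ≤ ε)
    {x : E} (hx : x ∈ L) : ‖x - K.starProjection x‖ ≤ ε * ‖x‖ := by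
  have hdiff : (K.starProjection - L.starProjection) x = K.starProjection x - x := by
    simp [L.starProjection_eq_self_iff.2 hx]
  rw [norm_sub_rev, ← hdiff]
  exact ((K.starProjection - L.starProjection).le_opNorm x).trans (by gcongr)

theorem Real.rpow_inv_natCast_le_of_le_pow {a c : ℝ} {k : ℕ} (hk : k ≠ 0) (ha : 0 ≤ a)
    (hc : 0 ≤ c) (h : a ≤ c ^ k) : a ^ (k : ℝ)⁻¹ ≤ c :=
  calc a ^ (k : ℝ)⁻¹ ≤ (c ^ k) ^ (k : ℝ)⁻¹ := by gcongr
    _ = c := Real.pow_rpow_inv_natCast hc hk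

theorem Real.rpow_le_rpow_rpow_inv_natCast_of_le_pow {a c z : ℝ} {k : ℕ} (hk : k ≠ 0)
    (ha : 0 < a) (hc : 0 ≤ c) (h : a ≤ c ^ k) (hz : z ≤ 0) : c ^ z ≤ (a ^ z) ^ (k : ℝ)⁻¹ := by
  rw [← Real.rpow_mul ha.le, mul_comm, Real.rpow_mul ha.le]
  exact Real.rpow_le_rpow_of_nonpos (by positivity)
    (Real.rpow_inv_natCast_le_of_le_pow hk ha.le hc h) hz

theorem projected_gaussian_covariance_det_bound_general (n k : ℕ) (hk : 1 ≤ k) (hkn : k ≤ n)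
    (σ : ℝ) (hσ : σ ∈ Set.Ioc (0:ℝ) 1) (ε : ℝ)
    (d : Fin n → ℝ) (hd : ∀ i, d i = if (i : ℕ) < k then σ ^ 2 else 1)
    (E₀ E₁ : Submodule ℝ (EuclideanSpace ℝ (Fin n)))
    (hE₀ : E₀ = Submodule.span ℝ
      (Set.range fun i : Fin k => (EuclideanSpace.single (Fin.castLE hkn i) (1:ℝ))))
    (hE₁ : Module.finrank ℝ E₁ = k)
    (hdist : ‖E₀.subtypeL.comp E₀.orthogonalProjection
        - E₁.subtypeL.comp E₁.orthogonalProjection‖ ≤ ε)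
    (A : E₁ →ₗ[ℝ] E₁)
    (hA : A = E₁.orthogonalProjection.toLinearMap.comp
      ((Matrix.toEuclideanLin (Matrix.diagonal d)).comp E₁.subtype)) :
    (LinearMap.det A) ^ ((k:ℝ)⁻¹) ≤ σ ^ 2 + ε ^ 2 ∧
    (2 * π * (σ ^ 2 + ε ^ 2)) ^ (-(1:ℝ)/2)
      ≤ (((2 * π) ^ k * LinearMap.det A) ^ (-(1:ℝ)/2)) ^ ((k:ℝ)⁻¹) := by
  obtain ⟨hσ0, hσ1⟩ := hσ
  set D := Matrix.toEuclideanLin (Matrix.diagonal d)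
  replace hA : A = E₁.compression D := hA
  have hquad (x : E₁) : ⟪A x, x⟫_ℝ = ∑ i, d i * (x : EuclideanSpace ℝ (Fin n)) i ^ 2 := by
    rw [hA, E₁.inner_compression_apply, Matrix.inner_toEuclideanLin_diagonal_self]
  have hlower (x : E₁) : σ ^ 2 * ‖x‖ ^ 2 ≤ ⟪A x, x⟫_ℝ := by
    refine hquad x ▸ EuclideanSpace.mul_norm_sq_le_sum_mul_sq (fun i => ?_) _
    rw [hd i]
    split_ifs
    · exact le_rfl
    · nlinarith
  have hupper (x : E₁) : ⟪A x, x⟫_ℝ ≤ (σ ^ 2 + ε ^ 2) * ‖x‖ ^ 2 := by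
    have hP₀ : ∀ i : Fin n, ¬(i : ℕ) < k → E₀.starProjection x i = 0 := fun i hi =>
      EuclideanSpace.apply_eq_zero_of_mem_span_single (f := Fin.castLE hkn)
        (hE₀ ▸ E₀.starProjection_apply_mem x) fun ⟨j, hj⟩ => hi (by rw [← hj]; exact j.2)
    calc ⟪A x, x⟫_ℝ
        ≤ σ ^ 2 * ‖x‖ ^ 2 + ‖(x : EuclideanSpace ℝ (Fin n)) - E₀.starProjection x‖ ^ 2 :=
          hquad x ▸ EuclideanSpace.sum_mul_sq_le_mul_norm_sq_add_norm_sub_sq (by positivity) hd _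
            hP₀
      _ ≤ σ ^ 2 * ‖x‖ ^ 2 + (ε * ‖x‖) ^ 2 := by
          gcongr; exact Submodule.norm_sub_starProjection_le hdist x.2
      _ = (σ ^ 2 + ε ^ 2) * ‖x‖ ^ 2 := by ring
  have hsymm : A.IsSymmetric := hA ▸ (Matrix.isSymmetric_toEuclideanLin_iff.2
    (Matrix.isHermitian_diagonal d)).compression E₁
  obtain ⟨hdet_lower, hdet_upper⟩ := hsymm.det_mem_Icc_pow hE₁ (by positivity) hlower hupper
  have hk0 : k ≠ 0 := by omega
  have hdet_pos : 0 < A.det := lt_of_lt_of_le (by positivity) hdet_lower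
  refine ⟨Real.rpow_inv_natCast_le_of_le_pow hk0 hdet_pos.le (by positivity) hdet_upper,
    Real.rpow_le_rpow_rpow_inv_natCast_of_le_pow hk0 (by positivity) (by positivity) ?_
      (by norm_num)⟩
  rw [mul_pow (2 * π)]
  gcongr

/-- If `E₀` is the span of the first `k` coordinate vectors, `E₁` is a `k`-dimensional
subspace with `‖P_{E₀} - P_{E₁}‖ ≤ ε`, and `D = diag(σ²,…,σ²,1,…,1)` (`σ²` in the first
`k` coordinates), then the covariance `A = P_{E₁} D P_{E₁}|_{E₁}` of `P_{E₁}D^{1/2}g`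
satisfies `(det A)^{1/k} ≤ σ² + ε²`; hence the Gaussian density with covariance `A`
satisfies `‖h‖_∞^{1/k} = ((2π)^k det A)^{-1/(2k)} ≥ (2π(σ² + ε²))^{-1/2}`. -/
theorem projected_gaussian_covariance_det_bound (n k : ℕ) (hk : 1 ≤ k) (hkn : k ≤ n)
    (σ : ℝ) (hσ : σ ∈ Set.Ioc (0:ℝ) 1) (ε : ℝ) (hε : 0 < ε)
    (d : Fin n → ℝ) (hd : ∀ i, d i = if (i : ℕ) < k then σ ^ 2 else 1)
    (E₀ E₁ : Submodule ℝ (EuclideanSpace ℝ (Fin n)))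
    (hE₀ : E₀ = Submodule.span ℝ
      (Set.range fun i : Fin k => (EuclideanSpace.single (Fin.castLE hkn i) (1:ℝ))))
    (hE₁ : Module.finrank ℝ E₁ = k)
    (hdist : ‖E₀.subtypeL.comp E₀.orthogonalProjection
        - E₁.subtypeL.comp E₁.orthogonalProjection‖ ≤ ε)
    (A : E₁ →ₗ[ℝ] E₁)
    (hA : A = E₁.orthogonalProjection.toLinearMap.comp
      ((Matrix.toEuclideanLin (Matrix.diagonal d)).comp E₁.subtype)) :
    (LinearMap.det A) ^ ((k:ℝ)⁻¹) ≤ σ ^ 2 + ε ^ 2 ∧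
    (2 * π * (σ ^ 2 + ε ^ 2)) ^ (-(1:ℝ)/2)
      ≤ (((2 * π) ^ k * LinearMap.det A) ^ (-(1:ℝ)/2)) ^ ((k:ℝ)⁻¹) :=
  projected_gaussian_covariance_det_bound_general n k hk hkn σ hσ ε d hd E₀ E₁ hE₀ hE₁ hdist A hA
end
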